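/- arXiv:2209.15203 — 6 statements merged into one kernel-verified Lean document; each statement's English description precedes it below -/
import Mathlib

section
/- Let d ≥ 1, 1 ≤ K ≤ d, and let w ∈ ℝ^d. Let S be any set of K coordinates carrying the largest absolute values of w (i.e., |w_j| ≤ |w_i| for every i ∈ S and every j ∉ S), and let Top_K(w) be the vector that equals w on S and is zero outside S. Then ‖Top_K(w) − w‖₂² ≤ ((d − K)/d) · ‖w‖₂². -/
/-! Every discarded coordinate is dominated in square by each of the `K` kept ones, so the average
square on the complement of `S` is at most the average square on `S`, hence at most the average
square over all `d` coordinates. The truncation error is the mass on the complement, which is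
therefore at most `(d - K)/d` of the total. -/

open Finset

section TopK

variable {ι : Type*} {w : ι → ℝ} {S : Finset ι}

theorem card_mul_sq_le_sum_sq_of_abs_le {j : ι} (hj : ∀ i ∈ S, |w j| ≤ |w i|) :
    S.card * w j ^ 2 ≤ ∑ i ∈ S, w i ^ 2 := by
  rw [← nsmul_eq_mul]
  exact S.card_nsmul_le_sum _ _ fun i hi => sq_le_sq.mpr (hj i hi)

variable [Fintype ι] [DecidableEq ι]

theorem card_mul_sum_compl_sq_le (hS : ∀ i ∈ S, ∀ j ∉ S, |w j| ≤ |w i|) :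
    S.card * ∑ j ∈ Sᶜ, w j ^ 2 ≤ Sᶜ.card * ∑ i ∈ S, w i ^ 2 := by
  rw [mul_sum, ← nsmul_eq_mul, ← sum_const]
  exact sum_le_sum fun j hj =>
    card_mul_sq_le_sum_sq_of_abs_le fun i hi => hS i hi j (mem_compl.mp hj)

theorem card_mul_sum_compl_sq_le_mul_sum_sq (hS : ∀ i ∈ S, ∀ j ∉ S, |w j| ≤ |w i|) :
    Fintype.card ι * ∑ j ∈ Sᶜ, w j ^ 2 ≤ (Fintype.card ι - S.card) * ∑ i, w i ^ 2 := by
  have hcard : (Fintype.card ι : ℝ) = S.card + Sᶜ.card := by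
    exact_mod_cast (card_add_card_compl S).symm
  rw [← sum_add_sum_compl S, hcard, add_sub_cancel_left, add_mul, mul_add]
  linarith [card_mul_sum_compl_sq_le hS]

end TopK

theorem EuclideanSpace.norm_sub_sq_eq_sum_compl_of_eq_ite {ι : Type*} [Fintype ι] [DecidableEq ι]
    {w v : EuclideanSpace ℝ ι} {S : Finset ι} (hv : ∀ i, v i = if i ∈ S then w i else 0) :
    ‖v - w‖ ^ 2 = ∑ j ∈ Sᶜ, w j ^ 2 := by
  rw [EuclideanSpace.real_norm_sq_eq, ← sum_add_sum_compl S]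
  have hS : ∀ i ∈ S, (v - w) i ^ 2 = 0 := fun i hi => by simp [hv, hi]
  have hSc : ∀ j ∈ Sᶜ, (v - w) j ^ 2 = w j ^ 2 := fun j hj => by
    simp [hv, mem_compl.mp hj]
  rw [sum_congr rfl hS, sum_congr rfl hSc, sum_const_zero, zero_add]

theorem topK_sub_self_sq_le_general {d K : ℕ}
    (w : EuclideanSpace ℝ (Fin d)) (S : Finset (Fin d)) (hScard : S.card = K)
    (hS : ∀ i ∈ S, ∀ j ∉ S, |w j| ≤ |w i|)
    (topK : EuclideanSpace ℝ (Fin d))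
    (htopK : ∀ i, topK i = if i ∈ S then w i else 0) :
    ‖topK - w‖ ^ 2 ≤ ((d - K : ℝ) / d) * ‖w‖ ^ 2 := by
  -- for `d = 0` the right side is the junk value `_ / 0 = 0`, but `ℝ^0` is trivial
  rcases d.eq_zero_or_pos with rfl | hd
  · simp [Subsingleton.elim (topK - w) 0]
  have hbound := card_mul_sum_compl_sq_le_mul_sum_sq (w := fun i => w i) hS
  rw [Fintype.card_fin, hScard] at hbound
  rw [EuclideanSpace.norm_sub_sq_eq_sum_compl_of_eq_ite htopK, EuclideanSpace.real_norm_sq_eq,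
    div_mul_eq_mul_div, le_div_iff₀ (by positivity), mul_comm]
  exact hbound

/-- For `w ∈ ℝ^d`, `1 ≤ K ≤ d`, and a top-K truncation of `w` along a set `S`
of `K` coordinates carrying the largest absolute values,
`‖Top_K(w) − w‖₂² ≤ ((d − K)/d) ‖w‖₂²`. -/
theorem topK_sub_self_sq_le {d K : ℕ} (hd : 1 ≤ d) (hK1 : 1 ≤ K) (hKd : K ≤ d)
    (w : EuclideanSpace ℝ (Fin d)) (S : Finset (Fin d)) (hScard : S.card = K)
    (hS : ∀ i ∈ S, ∀ j ∉ S, |w j| ≤ |w i|)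
    (topK : EuclideanSpace ℝ (Fin d))
    (htopK : ∀ i, topK i = if i ∈ S then w i else 0) :
    ‖topK - w‖ ^ 2 ≤ ((d - K : ℝ) / d) * ‖w‖ ^ 2 :=
  topK_sub_self_sq_le_general w S hScard hS topK htopK
end

section
/- (Lemma 1, bidirectional error-corrected recursion.) For the bidirectional compressed SGD iterates with an arbitrary compressor map C : ℝ^d → ℝ^d, arbitrary weights p_1,…,p_N ∈ ℝ, step sizes (α_t)_{t≥0}, and arbitrary gradient vectors (g_t^q), the error-corrected iterate satisfies, for every t ≥ 1, w̃_t = w̃_{t−1} − α_{t−1} Σ_{q=1}^N p_q g_{t−1}^q. -/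
open Finset

/-! Every compression `x ↦ C x` keeps the residual `x - C x` in an error memory, so the
error-corrected iterate, which adds the memories back, moves by the uncompressed averaged step. -/

section ErrorFeedback

variable {ι R E : Type*} [Fintype ι] [CommRing R] [AddCommGroup E] [Module R E]

lemma sum_smul_residual_add_sum_smul_compress (p : ι → R) (c : R) (C : E → E) (ε g : ι → E) :
    ∑ q, p q • (ε q + c • g q - C (ε q + c • g q)) + ∑ q, p q • C (ε q + c • g q)
      = ∑ q, p q • ε q + c • ∑ q, p q • g q := by
  rw [← sum_add_distrib, smul_sum, ← sum_add_distrib]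
  refine sum_congr rfl fun q _ => ?_
  rw [← smul_add, sub_add_cancel, smul_add, smul_comm c (p q)]

end ErrorFeedback

theorem bidirectional_error_corrected_recursion_general
    {d N : ℕ}
    (p : Fin N → ℝ) (α : ℕ → ℝ)
    (C : EuclideanSpace ℝ (Fin d) → EuclideanSpace ℝ (Fin d))
    (g : ℕ → Fin N → EuclideanSpace ℝ (Fin d))
    (a ε : ℕ → Fin N → EuclideanSpace ℝ (Fin d))
    (G δ w wtil : ℕ → EuclideanSpace ℝ (Fin d))
    (ha : ∀ t q, a (t + 1) q = ε t q + α t • g t q)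
    (hε : ∀ t q, ε (t + 1) q = a (t + 1) q - C (a (t + 1) q))
    (hG : ∀ t, G (t + 1) = ∑ q, p q • C (a (t + 1) q) + δ t)
    (hδ : ∀ t, δ (t + 1) = G (t + 1) - C (G (t + 1)))
    (hw : ∀ t, w (t + 1) = w t - C (G (t + 1)))
    (hwtil : ∀ t, wtil t = w t - ∑ q, p q • ε t q - δ t) :
    ∀ t, wtil (t + 1) = wtil t - α t • ∑ q, p q • g t q := by
  intro t
  have server : w (t + 1) - δ (t + 1) = w t - G (t + 1) := by
    rw [hw, hδ]
    abel
  have workers : ∑ q, p q • ε (t + 1) q + ∑ q, p q • C (a (t + 1) q)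
      = ∑ q, p q • ε t q + α t • ∑ q, p q • g t q := by
    simp only [hε, ha]
    exact sum_smul_residual_add_sum_smul_compress p (α t) C (ε t) (g t)
  calc wtil (t + 1) = (w (t + 1) - δ (t + 1)) - ∑ q, p q • ε (t + 1) q := by
        rw [hwtil]
        abel
    _ = w t - δ t - (∑ q, p q • ε (t + 1) q + ∑ q, p q • C (a (t + 1) q)) := by
        rw [server, hG]
        abel
    _ = wtil t - α t • ∑ q, p q • g t q := by
        rw [workers, hwtil]
        abel

/-- Lemma 1, bidirectional error-corrected recursion: for the bidirectional
compressed SGD iterates, the error-corrected iterate satisfies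
`w̃_t = w̃_{t−1} − α_{t−1} Σ_q p_q g_{t−1}^q` for every `t ≥ 1`. -/
theorem bidirectional_error_corrected_recursion
    {d N : ℕ} (hd : 1 ≤ d) (hN : 1 ≤ N)
    (p : Fin N → ℝ) (α : ℕ → ℝ)
    (C : EuclideanSpace ℝ (Fin d) → EuclideanSpace ℝ (Fin d))
    (g : ℕ → Fin N → EuclideanSpace ℝ (Fin d))
    (w₀ : EuclideanSpace ℝ (Fin d))
    (a ε : ℕ → Fin N → EuclideanSpace ℝ (Fin d))
    (G δ w wtil : ℕ → EuclideanSpace ℝ (Fin d))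
    (hε0 : ∀ q, ε 0 q = 0) (hδ0 : δ 0 = 0) (hw0 : w 0 = w₀)
    (ha : ∀ t q, a (t + 1) q = ε t q + α t • g t q)
    (hε : ∀ t q, ε (t + 1) q = a (t + 1) q - C (a (t + 1) q))
    (hG : ∀ t, G (t + 1) = ∑ q, p q • C (a (t + 1) q) + δ t)
    (hδ : ∀ t, δ (t + 1) = G (t + 1) - C (G (t + 1)))
    (hw : ∀ t, w (t + 1) = w t - C (G (t + 1)))
    (hwtil : ∀ t, wtil t = w t - ∑ q, p q • ε t q - δ t) :
    ∀ t, wtil (t + 1) = wtil t - α t • ∑ q, p q • g t q :=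
  bidirectional_error_corrected_recursion_general p α C g a ε G δ w wtil ha hε hG hδ hw hwtil
end

section
/- (One-step gap bound, bidirectional.) Suppose the compressor C satisfies ‖C(x) − x‖₂² ≤ (1 − γ)‖x‖₂² for all x ∈ ℝ^d with γ ∈ (0,1), and suppose that at step t ≥ 1 the iterates satisfy ‖C(δ_{t−1} + Σ_{q=1}^N p_q a_t^q) − C(δ_{t−1} + Σ_{q=1}^N p_q C(a_t^q))‖₂ ≤ ρ ‖α_{t−1} Σ_{q=1}^N p_q g_{t−1}^q‖₂ for some ρ > 0. Then ‖w_t − w̃_t‖₂ ≤ √(1 − γ) ‖w_{t−1} − w̃_{t−1}‖₂ + (√(1 − γ) + ρ) ‖w̃_t − w̃_{t−1}‖₂. -/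
open Finset

/-! With `X = δ_{t-1} + Σ_q p_q a_t^q` the aggregate the server would see without any
compression, error feedback gives exactly `w_t - w̃_t = X - C(g_t)` and
`w̃_t - w̃_{t-1} = -α_{t-1} Σ_q p_q g_{t-1}^q =: -v`, while `X = (w_{t-1} - w̃_{t-1}) + v`.
Splitting `X - C(g_t) = (X - C X) + (C X - C(g_t))`, the compressor bounds the first term by
`√(1-γ) ‖X‖` and the gap assumption bounds the second by `ρ ‖v‖`. -/

theorem norm_sub_le_sqrt_mul_norm_of_sq_le {E : Type*} [SeminormedAddCommGroup E]
    {C : E → E} {c : ℝ} {x : E} (hC : ‖C x - x‖ ^ 2 ≤ c * ‖x‖ ^ 2) :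
    ‖x - C x‖ ≤ √c * ‖x‖ := by
  calc ‖x - C x‖ = √(‖C x - x‖ ^ 2) := by rw [Real.sqrt_sq (norm_nonneg _), norm_sub_rev]
    _ ≤ √(c * ‖x‖ ^ 2) := Real.sqrt_le_sqrt hC
    _ = √c * ‖x‖ := by rw [Real.sqrt_mul' _ (sq_nonneg _), Real.sqrt_sq (norm_nonneg _)]

theorem norm_add_sub_le_of_compressor {E : Type*} [SeminormedAddCommGroup E]
    {C : E → E} {c ρ : ℝ} (hC : ∀ x, ‖C x - x‖ ^ 2 ≤ c * ‖x‖ ^ 2) {u v y : E}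
    (hgap : ‖C (u + v) - C y‖ ≤ ρ * ‖v‖) :
    ‖u + v - C y‖ ≤ √c * ‖u‖ + (√c + ρ) * ‖v‖ := by
  have hcompress : ‖u + v - C (u + v)‖ ≤ √c * (‖u‖ + ‖v‖) :=
    (norm_sub_le_sqrt_mul_norm_of_sq_le (hC _)).trans
      (mul_le_mul_of_nonneg_left (norm_add_le u v) (Real.sqrt_nonneg c))
  calc ‖u + v - C y‖ = ‖(u + v - C (u + v)) + (C (u + v) - C y)‖ := by abel_nf
    _ ≤ ‖u + v - C (u + v)‖ + ‖C (u + v) - C y‖ := norm_add_le _ _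
    _ ≤ √c * (‖u‖ + ‖v‖) + ρ * ‖v‖ := add_le_add hcompress hgap
    _ = √c * ‖u‖ + (√c + ρ) * ‖v‖ := by ring

section ErrorFeedback

variable {R E ι : Type*} [CommRing R] [AddCommGroup E] [Module R E] [Fintype ι]
  {p : ι → R} {α : ℕ → R} {C : E → E} {g a ε : ℕ → ι → E} {G δ w wtil : ℕ → E}

theorem sub_wtil_succ_eq
    (hε : ∀ s q, ε (s + 1) q = a (s + 1) q - C (a (s + 1) q))
    (hG : ∀ s, G (s + 1) = ∑ q, p q • C (a (s + 1) q) + δ s)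
    (hδ : ∀ s, δ (s + 1) = G (s + 1) - C (G (s + 1)))
    (hwtil : ∀ s, wtil s = w s - ∑ q, p q • ε s q - δ s) (t : ℕ) :
    w (t + 1) - wtil (t + 1) =
      δ t + ∑ q, p q • a (t + 1) q - C (δ t + ∑ q, p q • C (a (t + 1) q)) := by
  rw [hwtil, hδ, hG, add_comm (∑ q, _)]
  simp only [hε, smul_sub, sum_sub_distrib]
  abel

theorem uncompressed_aggregate_eq
    (ha : ∀ s q, a (s + 1) q = ε s q + α s • g s q)
    (hwtil : ∀ s, wtil s = w s - ∑ q, p q • ε s q - δ s) (t : ℕ) :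
    δ t + ∑ q, p q • a (t + 1) q = (w t - wtil t) + α t • ∑ q, p q • g t q := by
  simp only [hwtil, ha, smul_add, sum_add_distrib, smul_sum, smul_comm (α t)]
  abel

theorem wtil_succ_sub_wtil
    (ha : ∀ s q, a (s + 1) q = ε s q + α s • g s q)
    (hε : ∀ s q, ε (s + 1) q = a (s + 1) q - C (a (s + 1) q))
    (hG : ∀ s, G (s + 1) = ∑ q, p q • C (a (s + 1) q) + δ s)
    (hδ : ∀ s, δ (s + 1) = G (s + 1) - C (G (s + 1)))
    (hw : ∀ s, w (s + 1) = w s - C (G (s + 1)))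
    (hwtil : ∀ s, wtil s = w s - ∑ q, p q • ε s q - δ s) (t : ℕ) :
    wtil (t + 1) - wtil t = -(α t • ∑ q, p q • g t q) := by
  have hgap := sub_wtil_succ_eq hε hG hδ hwtil t
  rw [uncompressed_aggregate_eq ha hwtil, hw, hG, add_comm (∑ q, _)] at hgap
  linear_combination (norm := abel) -hgap

end ErrorFeedback

theorem bidirectional_one_step_gap_bound_general
    {d N : ℕ}
    (p : Fin N → ℝ) (α : ℕ → ℝ)
    (C : EuclideanSpace ℝ (Fin d) → EuclideanSpace ℝ (Fin d))
    (g : ℕ → Fin N → EuclideanSpace ℝ (Fin d))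
    (a ε : ℕ → Fin N → EuclideanSpace ℝ (Fin d))
    (G δ w wtil : ℕ → EuclideanSpace ℝ (Fin d))
    (ha : ∀ s q, a (s + 1) q = ε s q + α s • g s q)
    (hε : ∀ s q, ε (s + 1) q = a (s + 1) q - C (a (s + 1) q))
    (hG : ∀ s, G (s + 1) = ∑ q, p q • C (a (s + 1) q) + δ s)
    (hδ : ∀ s, δ (s + 1) = G (s + 1) - C (G (s + 1)))
    (hw : ∀ s, w (s + 1) = w s - C (G (s + 1)))
    (hwtil : ∀ s, wtil s = w s - ∑ q, p q • ε s q - δ s)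
    {γ : ℝ}
    (hC : ∀ x, ‖C x - x‖ ^ 2 ≤ (1 - γ) * ‖x‖ ^ 2)
    {ρ : ℝ} (t : ℕ)
    (hgap : ‖C (δ t + ∑ q, p q • a (t + 1) q) -
        C (δ t + ∑ q, p q • C (a (t + 1) q))‖ ≤ ρ * ‖α t • ∑ q, p q • g t q‖) :
    ‖w (t + 1) - wtil (t + 1)‖ ≤
      Real.sqrt (1 - γ) * ‖w t - wtil t‖ +
        (Real.sqrt (1 - γ) + ρ) * ‖wtil (t + 1) - wtil t‖ := by
  rw [sub_wtil_succ_eq hε hG hδ hwtil, wtil_succ_sub_wtil ha hε hG hδ hw hwtil, norm_neg]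
  rw [uncompressed_aggregate_eq ha hwtil] at hgap ⊢
  exact norm_add_sub_le_of_compressor hC hgap

/-- one-step gap bound, bidirectional: if `C` is a `γ`-approximate compressor
and at step `t+1` the gap assumption holds with constant `ρ`, then
`‖w_{t+1} − w̃_{t+1}‖ ≤ √(1−γ) ‖w_t − w̃_t‖ + (√(1−γ) + ρ) ‖w̃_{t+1} − w̃_t‖`. -/
theorem bidirectional_one_step_gap_bound
    {d N : ℕ} (hd : 1 ≤ d) (hN : 1 ≤ N)
    (p : Fin N → ℝ) (α : ℕ → ℝ)
    (C : EuclideanSpace ℝ (Fin d) → EuclideanSpace ℝ (Fin d))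
    (g : ℕ → Fin N → EuclideanSpace ℝ (Fin d))
    (w₀ : EuclideanSpace ℝ (Fin d))
    (a ε : ℕ → Fin N → EuclideanSpace ℝ (Fin d))
    (G δ w wtil : ℕ → EuclideanSpace ℝ (Fin d))
    (hε0 : ∀ q, ε 0 q = 0) (hδ0 : δ 0 = 0) (hw0 : w 0 = w₀)
    (ha : ∀ s q, a (s + 1) q = ε s q + α s • g s q)
    (hε : ∀ s q, ε (s + 1) q = a (s + 1) q - C (a (s + 1) q))
    (hG : ∀ s, G (s + 1) = ∑ q, p q • C (a (s + 1) q) + δ s)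
    (hδ : ∀ s, δ (s + 1) = G (s + 1) - C (G (s + 1)))
    (hw : ∀ s, w (s + 1) = w s - C (G (s + 1)))
    (hwtil : ∀ s, wtil s = w s - ∑ q, p q • ε s q - δ s)
    {γ : ℝ} (hγ0 : 0 < γ) (hγ1 : γ < 1)
    (hC : ∀ x, ‖C x - x‖ ^ 2 ≤ (1 - γ) * ‖x‖ ^ 2)
    {ρ : ℝ} (hρ : 0 < ρ) (t : ℕ)
    (hgap : ‖C (δ t + ∑ q, p q • a (t + 1) q) -
        C (δ t + ∑ q, p q • C (a (t + 1) q))‖ ≤ ρ * ‖α t • ∑ q, p q • g t q‖) :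
    ‖w (t + 1) - wtil (t + 1)‖ ≤
      Real.sqrt (1 - γ) * ‖w t - wtil t‖ +
        (Real.sqrt (1 - γ) + ρ) * ‖wtil (t + 1) - wtil t‖ :=
  bidirectional_one_step_gap_bound_general p α C g a ε G δ w wtil ha hε hG hδ hw hwtil hC t hgap
end

section
/- (Lemma 2.) Suppose the compressor C satisfies ‖C(x) − x‖₂² ≤ (1 − γ)‖x‖₂² for all x ∈ ℝ^d with γ ∈ (0,1), and suppose that for every s with 1 ≤ s ≤ t the iterates satisfy ‖C(δ_{s−1} + Σ_{q=1}^N p_q a_s^q) − C(δ_{s−1} + Σ_{q=1}^N p_q C(a_s^q))‖₂ ≤ ρ ‖α_{s−1} Σ_{q=1}^N p_q g_{s−1}^q‖₂ for some ρ > 0. Then for every λ > 0, ‖w_t − w̃_t‖₂² ≤ (1/λ)(√(1 − γ) + ρ)² · (1/(1 − γ)) · Σ_{i=1}^t ((1 + λ)(1 − γ))^i ‖w̃_{t−i+1} − w̃_{t−i}‖₂². -/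
/-!
Write `eₛ = wₛ - w̃ₛ`. Error feedback makes `w̃` an uncompressed SGD trajectory,
`w̃ₛ₊₁ - w̃ₛ = -αₛ ∑_q p_q gₛ^q`, while `eₛ₊₁ = Aₛ - C(Bₛ)` with
`Aₛ = δₛ + ∑_q p_q aₛ₊₁^q = eₛ + αₛ ∑_q p_q gₛ^q` and `Bₛ = δₛ + ∑_q p_q C(aₛ₊₁^q)`.
Passing through `C(Aₛ)`, the compressor bound and the gap hypothesis give the one-step estimate
`‖eₛ₊₁‖ ≤ √(1-γ) ‖eₛ‖ + (√(1-γ) + ρ) ‖w̃ₛ₊₁ - w̃ₛ‖`. Unrolling it from `e₀ = 0` bounds `‖eₜ‖` by a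
sum of `t` terms, and Cauchy–Schwarz with the weights `(1+λ)^{-i}`, whose sum is below `1/λ`,
squares that sum into the claimed bound.
-/

open Finset

theorem le_sum_range_pow_mul_of_le_mul_add {β : ℝ} (hβ : 0 ≤ β) {e u : ℕ → ℝ} {t : ℕ}
    (h0 : e 0 ≤ 0) (hstep : ∀ s < t, e (s + 1) ≤ β * e s + u s) :
    e t ≤ ∑ j ∈ range t, β ^ j * u (t - (j + 1)) := by
  induction t with
  | zero => simpa using h0
  | succ t ih =>
    calc e (t + 1) ≤ β * e t + u t := hstep t (lt_add_one t)
      _ ≤ β * ∑ j ∈ range t, β ^ j * u (t - (j + 1)) + u t := by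
        gcongr
        exact ih fun s hs => hstep s (by omega)
      _ = ∑ j ∈ range (t + 1), β ^ j * u (t + 1 - (j + 1)) := by
        simp [sum_range_succ', mul_sum, pow_succ', mul_assoc]

theorem sum_range_inv_pow_succ_le {lam : ℝ} (hlam : 0 < lam) (t : ℕ) :
    ∑ j ∈ range t, ((1 + lam) ^ (j + 1))⁻¹ ≤ 1 / lam := by
  have hr : (0 : ℝ) ≤ (1 + lam)⁻¹ := by positivity
  have hr1 : (1 + lam)⁻¹ < 1 := inv_lt_one_of_one_lt₀ (by linarith)
  calc ∑ j ∈ range t, ((1 + lam) ^ (j + 1))⁻¹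
      = (1 + lam)⁻¹ * ∑ j ∈ Ico 0 t, (1 + lam)⁻¹ ^ j := by
        rw [← range_eq_Ico, mul_sum]
        simp only [inv_pow, pow_succ', mul_inv]
    _ ≤ (1 + lam)⁻¹ * ((1 + lam)⁻¹ ^ 0 / (1 - (1 + lam)⁻¹)) :=
        mul_le_mul_of_nonneg_left (geom_sum_Ico_le_of_lt_one hr hr1) hr
    _ = 1 / lam := by
        field_simp
        rw [add_sub_cancel_left, div_self hlam.ne']

theorem sq_sum_range_le_inv_mul_sum_pow_mul_sq {lam : ℝ} (hlam : 0 < lam) (x : ℕ → ℝ)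
    (t : ℕ) :
    (∑ j ∈ range t, x j) ^ 2 ≤ 1 / lam * ∑ j ∈ range t, (1 + lam) ^ (j + 1) * x j ^ 2 :=
  calc (∑ j ∈ range t, x j) ^ 2
      ≤ (∑ j ∈ range t, ((1 + lam) ^ (j + 1))⁻¹) *
          ∑ j ∈ range t, (1 + lam) ^ (j + 1) * x j ^ 2 :=
        sum_sq_le_sum_mul_sum_of_sq_le_mul _ (fun _ _ => by positivity)
          (fun _ _ => by positivity) fun j _ => by
            rw [inv_mul_cancel_left₀ (by positivity)]
    _ ≤ 1 / lam * ∑ j ∈ range t, (1 + lam) ^ (j + 1) * x j ^ 2 :=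
        mul_le_mul_of_nonneg_right (sum_range_inv_pow_succ_le hlam t)
          (sum_nonneg fun _ _ => by positivity)

theorem sum_Icc_one_eq_sum_range {M : Type*} [AddCommMonoid M] (f : ℕ → M) (t : ℕ) :
    ∑ i ∈ Icc 1 t, f i = ∑ j ∈ range t, f (j + 1) := by
  rw [range_eq_Ico, sum_Ico_add' f 0 t 1]
  rfl

theorem norm_sub_self_le_sqrt_mul_norm {E : Type*} [SeminormedAddCommGroup E] {C : E → E}
    {c : ℝ} (hC : ∀ x, ‖C x - x‖ ^ 2 ≤ c * ‖x‖ ^ 2) (x : E) : ‖C x - x‖ ≤ √c * ‖x‖ := by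
  rw [← Real.sqrt_sq (norm_nonneg (C x - x)), ← Real.sqrt_sq (norm_nonneg x),
    ← Real.sqrt_mul' _ (sq_nonneg _)]
  exact Real.sqrt_le_sqrt (hC x)

namespace BidirectionalCompressedSGD

variable {ι E : Type*} [Fintype ι] {p : ι → ℝ} {α : ℕ → ℝ}

section Identities

variable [AddCommGroup E] [Module ℝ E]
  {C : E → E} {g a ε : ℕ → ι → E} {G δ w wtil : ℕ → E}

theorem delta_add_sum_eq (ha : ∀ s q, a (s + 1) q = ε s q + α s • g s q)
    (hwtil : ∀ s, wtil s = w s - ∑ q, p q • ε s q - δ s) (s : ℕ) :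
    δ s + ∑ q, p q • a (s + 1) q = (w s - wtil s) + α s • ∑ q, p q • g s q := by
  simp only [hwtil, ha, smul_add, sum_add_distrib, smul_sum, smul_comm (α s)]
  abel

theorem sub_wtil_succ_eq (hε : ∀ s q, ε (s + 1) q = a (s + 1) q - C (a (s + 1) q))
    (hG : ∀ s, G (s + 1) = ∑ q, p q • C (a (s + 1) q) + δ s)
    (hδ : ∀ s, δ (s + 1) = G (s + 1) - C (G (s + 1)))
    (hwtil : ∀ s, wtil s = w s - ∑ q, p q • ε s q - δ s) (s : ℕ) :
    w (s + 1) - wtil (s + 1) =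
      (δ s + ∑ q, p q • a (s + 1) q) - C (δ s + ∑ q, p q • C (a (s + 1) q)) := by
  simp only [hwtil, hδ, hG, hε, smul_sub, sum_sub_distrib, add_comm (δ s)]
  abel

theorem wtil_succ_sub (ha : ∀ s q, a (s + 1) q = ε s q + α s • g s q)
    (hε : ∀ s q, ε (s + 1) q = a (s + 1) q - C (a (s + 1) q))
    (hG : ∀ s, G (s + 1) = ∑ q, p q • C (a (s + 1) q) + δ s)
    (hδ : ∀ s, δ (s + 1) = G (s + 1) - C (G (s + 1)))
    (hw : ∀ s, w (s + 1) = w s - C (G (s + 1)))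
    (hwtil : ∀ s, wtil s = w s - ∑ q, p q • ε s q - δ s) (s : ℕ) :
    wtil (s + 1) - wtil s = -(α s • ∑ q, p q • g s q) := by
  have hsucc := sub_wtil_succ_eq hε hG hδ hwtil s
  rw [delta_add_sum_eq ha hwtil, add_comm (δ s), ← hG] at hsucc
  linear_combination (norm := module) hw s - hsucc

end Identities

variable [SeminormedAddCommGroup E] [Module ℝ E]
  {C : E → E} {g a ε : ℕ → ι → E} {G δ w wtil : ℕ → E}

theorem norm_sub_wtil_succ_le (ha : ∀ s q, a (s + 1) q = ε s q + α s • g s q)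
    (hε : ∀ s q, ε (s + 1) q = a (s + 1) q - C (a (s + 1) q))
    (hG : ∀ s, G (s + 1) = ∑ q, p q • C (a (s + 1) q) + δ s)
    (hδ : ∀ s, δ (s + 1) = G (s + 1) - C (G (s + 1)))
    (hw : ∀ s, w (s + 1) = w s - C (G (s + 1)))
    (hwtil : ∀ s, wtil s = w s - ∑ q, p q • ε s q - δ s)
    {c ρ : ℝ} (hC : ∀ x, ‖C x - x‖ ^ 2 ≤ c * ‖x‖ ^ 2) {s : ℕ}
    (hgap : ‖C (δ s + ∑ q, p q • a (s + 1) q) - C (δ s + ∑ q, p q • C (a (s + 1) q))‖ ≤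
      ρ * ‖α s • ∑ q, p q • g s q‖) :
    ‖w (s + 1) - wtil (s + 1)‖ ≤
      √c * ‖w s - wtil s‖ + (√c + ρ) * ‖wtil (s + 1) - wtil s‖ := by
  rw [sub_wtil_succ_eq hε hG hδ hwtil, wtil_succ_sub ha hε hG hδ hw hwtil, norm_neg]
  set A := δ s + ∑ q, p q • a (s + 1) q with hA
  set B := δ s + ∑ q, p q • C (a (s + 1) q)
  set Δ := α s • ∑ q, p q • g s q
  have hA_le : ‖A‖ ≤ ‖w s - wtil s‖ + ‖Δ‖ := by
    rw [hA, delta_add_sum_eq ha hwtil]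
    exact norm_add_le _ _
  calc ‖A - C B‖ ≤ ‖C A - A‖ + ‖C A - C B‖ := by
        rw [← norm_sub_rev A]
        exact norm_sub_le_norm_sub_add_norm_sub _ _ _
    _ ≤ √c * ‖A‖ + ρ * ‖Δ‖ := add_le_add (norm_sub_self_le_sqrt_mul_norm hC A) hgap
    _ ≤ √c * (‖w s - wtil s‖ + ‖Δ‖) + ρ * ‖Δ‖ := by gcongr
    _ = √c * ‖w s - wtil s‖ + (√c + ρ) * ‖Δ‖ := by ring

end BidirectionalCompressedSGD

open BidirectionalCompressedSGD in
theorem bidirectional_gap_bound_general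
    {d N : ℕ}
    (p : Fin N → ℝ) (α : ℕ → ℝ)
    (C : EuclideanSpace ℝ (Fin d) → EuclideanSpace ℝ (Fin d))
    (g : ℕ → Fin N → EuclideanSpace ℝ (Fin d))
    (a ε : ℕ → Fin N → EuclideanSpace ℝ (Fin d))
    (G δ w wtil : ℕ → EuclideanSpace ℝ (Fin d))
    (hε0 : ∀ q, ε 0 q = 0) (hδ0 : δ 0 = 0)
    (ha : ∀ s q, a (s + 1) q = ε s q + α s • g s q)
    (hε : ∀ s q, ε (s + 1) q = a (s + 1) q - C (a (s + 1) q))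
    (hG : ∀ s, G (s + 1) = ∑ q, p q • C (a (s + 1) q) + δ s)
    (hδ : ∀ s, δ (s + 1) = G (s + 1) - C (G (s + 1)))
    (hw : ∀ s, w (s + 1) = w s - C (G (s + 1)))
    (hwtil : ∀ s, wtil s = w s - ∑ q, p q • ε s q - δ s)
    {γ : ℝ} (hγ1 : γ < 1)
    (hC : ∀ x, ‖C x - x‖ ^ 2 ≤ (1 - γ) * ‖x‖ ^ 2)
    {ρ : ℝ} (t : ℕ)
    (hgap : ∀ s < t, ‖C (δ s + ∑ q, p q • a (s + 1) q) -
        C (δ s + ∑ q, p q • C (a (s + 1) q))‖ ≤ ρ * ‖α s • ∑ q, p q • g s q‖) :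
    ∀ lam : ℝ, 0 < lam →
      ‖w t - wtil t‖ ^ 2 ≤
        (1 / lam) * (Real.sqrt (1 - γ) + ρ) ^ 2 * (1 / (1 - γ)) *
          ∑ i ∈ Icc 1 t, ((1 + lam) * (1 - γ)) ^ i *
            ‖wtil (t - i + 1) - wtil (t - i)‖ ^ 2 := by
  intro lam hlam
  have h1γ : 0 < 1 - γ := sub_pos.2 hγ1
  set x : ℕ → ℝ := fun j =>
    √(1 - γ) ^ j * ((√(1 - γ) + ρ) * ‖wtil (t - (j + 1) + 1) - wtil (t - (j + 1))‖) with hx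
  have hunroll : ‖w t - wtil t‖ ≤ ∑ j ∈ range t, x j :=
    le_sum_range_pow_mul_of_le_mul_add (e := fun s => ‖w s - wtil s‖) (Real.sqrt_nonneg _)
      (by simp [hwtil, hε0, hδ0])
      fun s hs => norm_sub_wtil_succ_le ha hε hG hδ hw hwtil hC (hgap s hs)
  calc ‖w t - wtil t‖ ^ 2 ≤ (∑ j ∈ range t, x j) ^ 2 :=
        pow_le_pow_left₀ (norm_nonneg _) hunroll 2
    _ ≤ 1 / lam * ∑ j ∈ range t, (1 + lam) ^ (j + 1) * x j ^ 2 :=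
        sq_sum_range_le_inv_mul_sum_pow_mul_sq hlam x t
    _ = _ := by
      rw [sum_Icc_one_eq_sum_range, mul_sum, mul_sum]
      refine sum_congr rfl fun j _ => ?_
      rw [hx, mul_pow (1 + lam), pow_succ (1 - γ), mul_pow, mul_pow, ← pow_mul, mul_comm j 2,
        pow_mul, Real.sq_sqrt h1γ.le]
      field_simp

/-- Lemma 2: if `C` is a `γ`-approximate compressor and the gap assumption
holds with constant `ρ` at every step `s` with `1 ≤ s ≤ t`, then for every `λ > 0`,
`‖w_t − w̃_t‖² ≤ (1/λ)(√(1−γ)+ρ)² (1/(1−γ)) Σ_{i=1}^t ((1+λ)(1−γ))^i ‖w̃_{t−i+1} − w̃_{t−i}‖²`. -/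
theorem bidirectional_gap_bound
    {d N : ℕ} (hd : 1 ≤ d) (hN : 1 ≤ N)
    (p : Fin N → ℝ) (α : ℕ → ℝ)
    (C : EuclideanSpace ℝ (Fin d) → EuclideanSpace ℝ (Fin d))
    (g : ℕ → Fin N → EuclideanSpace ℝ (Fin d))
    (w₀ : EuclideanSpace ℝ (Fin d))
    (a ε : ℕ → Fin N → EuclideanSpace ℝ (Fin d))
    (G δ w wtil : ℕ → EuclideanSpace ℝ (Fin d))
    (hε0 : ∀ q, ε 0 q = 0) (hδ0 : δ 0 = 0) (hw0 : w 0 = w₀)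
    (ha : ∀ s q, a (s + 1) q = ε s q + α s • g s q)
    (hε : ∀ s q, ε (s + 1) q = a (s + 1) q - C (a (s + 1) q))
    (hG : ∀ s, G (s + 1) = ∑ q, p q • C (a (s + 1) q) + δ s)
    (hδ : ∀ s, δ (s + 1) = G (s + 1) - C (G (s + 1)))
    (hw : ∀ s, w (s + 1) = w s - C (G (s + 1)))
    (hwtil : ∀ s, wtil s = w s - ∑ q, p q • ε s q - δ s)
    {γ : ℝ} (hγ0 : 0 < γ) (hγ1 : γ < 1)
    (hC : ∀ x, ‖C x - x‖ ^ 2 ≤ (1 - γ) * ‖x‖ ^ 2)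
    {ρ : ℝ} (hρ : 0 < ρ) (t : ℕ)
    (hgap : ∀ s < t, ‖C (δ s + ∑ q, p q • a (s + 1) q) -
        C (δ s + ∑ q, p q • C (a (s + 1) q))‖ ≤ ρ * ‖α s • ∑ q, p q • g s q‖) :
    ∀ lam : ℝ, 0 < lam →
      ‖w t - wtil t‖ ^ 2 ≤
        (1 / lam) * (Real.sqrt (1 - γ) + ρ) ^ 2 * (1 / (1 - γ)) *
          ∑ i ∈ Icc 1 t, ((1 + lam) * (1 - γ)) ^ i *
            ‖wtil (t - i + 1) - wtil (t - i)‖ ^ 2 :=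
  bidirectional_gap_bound_general p α C g a ε G δ w wtil hε0 hδ0 ha hε hG hδ hw hwtil hγ1 hC t hgap
end

section
/- (One-step gap bound, unidirectional.) Suppose the compressor C satisfies ‖C(x) − x‖₂² ≤ (1 − γ)‖x‖₂² for all x ∈ ℝ^d with γ ∈ (0,1), and suppose that at step t ≥ 1 the unidirectional iterates satisfy ‖C(Σ_{q=1}^N p_q a_t^q) − Σ_{q=1}^N p_q C(a_t^q)‖₂ ≤ ρ̂ ‖α_{t−1} Σ_{q=1}^N p_q g_{t−1}^q‖₂ for some ρ̂ > 0. Then ‖w_t − w̃_t‖₂ ≤ √(1 − γ) ‖w_{t−1} − w̃_{t−1}‖₂ + (√(1 − γ) + ρ̂) ‖w̃_t − w̃_{t−1}‖₂. -/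
/-!
The gap `w_t - w̃_t` is the averaged error `∑ p_q ε_t^q`, so the averaged accumulator
`A = ∑ p_q a_{t+1}^q` equals this gap plus the averaged step `G = α_t ∑ p_q g_t^q`, and
`w̃_{t+1} - w̃_t = -G`. The new gap is `A - ∑ p_q C(a_{t+1}^q)`; passing through `C(A)`, the
compressor bound controls `‖A - C(A)‖ ≤ √(1-γ) (‖w_t - w̃_t‖ + ‖G‖)` and the gap assumption
controls `‖C(A) - ∑ p_q C(a_{t+1}^q)‖ ≤ ρ̂ ‖G‖`.
-/

open Finset

lemma norm_le_sqrt_mul_of_sq_le {E F : Type*} [SeminormedAddCommGroup E]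
    [SeminormedAddCommGroup F] {x : E} {y : F} {c : ℝ} (h : ‖x‖ ^ 2 ≤ c * ‖y‖ ^ 2) :
    ‖x‖ ≤ √c * ‖y‖ := by
  simpa [Real.sqrt_mul' _ (sq_nonneg ‖y‖)] using Real.sqrt_le_sqrt h

section UnidirectionalCompressedSGD

variable {V ι : Type*} [AddCommGroup V] [Module ℝ V] [Fintype ι]
  {p : ι → ℝ} {α : ℕ → ℝ} {C : V → V} {g a ε : ℕ → ι → V} {w wtil : ℕ → V}

lemma sum_smul_accumulator_succ (ha : ∀ s q, a (s + 1) q = ε s q + α s • g s q) (t : ℕ) :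
    ∑ q, p q • a (t + 1) q = ∑ q, p q • ε t q + α t • ∑ q, p q • g t q := by
  simp only [ha, smul_add, smul_sum, sum_add_distrib, smul_comm (α t)]

lemma sum_smul_error_succ (hε : ∀ s q, ε (s + 1) q = a (s + 1) q - C (a (s + 1) q))
    (t : ℕ) :
    ∑ q, p q • ε (t + 1) q = ∑ q, p q • a (t + 1) q - ∑ q, p q • C (a (t + 1) q) := by
  simp only [hε, smul_sub, sum_sub_distrib]

lemma sub_errorCorrected_eq (hwtil : ∀ s, wtil s = w s - ∑ q, p q • ε s q) (s : ℕ) :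
    w s - wtil s = ∑ q, p q • ε s q := by
  rw [hwtil, sub_sub_cancel]

lemma errorCorrected_succ_sub (ha : ∀ s q, a (s + 1) q = ε s q + α s • g s q)
    (hε : ∀ s q, ε (s + 1) q = a (s + 1) q - C (a (s + 1) q))
    (hw : ∀ s, w (s + 1) = w s - ∑ q, p q • C (a (s + 1) q))
    (hwtil : ∀ s, wtil s = w s - ∑ q, p q • ε s q) (t : ℕ) :
    wtil (t + 1) - wtil t = -(α t • ∑ q, p q • g t q) := by
  rw [hwtil, hwtil, sum_smul_error_succ hε, sum_smul_accumulator_succ ha, hw]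
  abel

end UnidirectionalCompressedSGD

theorem unidirectional_one_step_gap_bound_general
    {d N : ℕ}
    (p : Fin N → ℝ) (α : ℕ → ℝ)
    (C : EuclideanSpace ℝ (Fin d) → EuclideanSpace ℝ (Fin d))
    (g : ℕ → Fin N → EuclideanSpace ℝ (Fin d))
    (a ε : ℕ → Fin N → EuclideanSpace ℝ (Fin d))
    (w wtil : ℕ → EuclideanSpace ℝ (Fin d))
    (ha : ∀ s q, a (s + 1) q = ε s q + α s • g s q)
    (hε : ∀ s q, ε (s + 1) q = a (s + 1) q - C (a (s + 1) q))
    (hw : ∀ s, w (s + 1) = w s - ∑ q, p q • C (a (s + 1) q))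
    (hwtil : ∀ s, wtil s = w s - ∑ q, p q • ε s q)
    {γ : ℝ}
    (hC : ∀ x, ‖C x - x‖ ^ 2 ≤ (1 - γ) * ‖x‖ ^ 2)
    {ρhat : ℝ} (t : ℕ)
    (hgap : ‖C (∑ q, p q • a (t + 1) q) - ∑ q, p q • C (a (t + 1) q)‖ ≤
        ρhat * ‖α t • ∑ q, p q • g t q‖) :
    ‖w (t + 1) - wtil (t + 1)‖ ≤
      Real.sqrt (1 - γ) * ‖w t - wtil t‖ +
        (Real.sqrt (1 - γ) + ρhat) * ‖wtil (t + 1) - wtil t‖ := by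
  set A := ∑ q, p q • a (t + 1) q
  set G := α t • ∑ q, p q • g t q
  set S := ∑ q, p q • C (a (t + 1) q)
  have hA : A = (w t - wtil t) + G := by
    rw [sub_errorCorrected_eq hwtil]
    exact sum_smul_accumulator_succ ha t
  have hgap_succ : w (t + 1) - wtil (t + 1) = A - S := by
    rw [sub_errorCorrected_eq hwtil]
    exact sum_smul_error_succ hε t
  rw [hgap_succ, errorCorrected_succ_sub ha hε hw hwtil, norm_neg]
  calc ‖A - S‖ ≤ ‖A - C A‖ + ‖C A - S‖ := norm_sub_le_norm_sub_add_norm_sub _ _ _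
    _ ≤ √(1 - γ) * (‖w t - wtil t‖ + ‖G‖) + ρhat * ‖G‖ := by
        gcongr
        rw [norm_sub_rev]
        refine (norm_le_sqrt_mul_of_sq_le (hC A)).trans ?_
        gcongr
        exact hA ▸ norm_add_le _ _
    _ = √(1 - γ) * ‖w t - wtil t‖ + (√(1 - γ) + ρhat) * ‖G‖ := by ring

/-- one-step gap bound, unidirectional: if `C` is a `γ`-approximate compressor
and at step `t+1` the unidirectional gap assumption holds with constant `ρ̂`, then
`‖w_{t+1} − w̃_{t+1}‖ ≤ √(1−γ) ‖w_t − w̃_t‖ + (√(1−γ) + ρ̂) ‖w̃_{t+1} − w̃_t‖`. -/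
theorem unidirectional_one_step_gap_bound
    {d N : ℕ} (hd : 1 ≤ d) (hN : 1 ≤ N)
    (p : Fin N → ℝ) (α : ℕ → ℝ)
    (C : EuclideanSpace ℝ (Fin d) → EuclideanSpace ℝ (Fin d))
    (g : ℕ → Fin N → EuclideanSpace ℝ (Fin d))
    (w₀ : EuclideanSpace ℝ (Fin d))
    (a ε : ℕ → Fin N → EuclideanSpace ℝ (Fin d))
    (w wtil : ℕ → EuclideanSpace ℝ (Fin d))
    (hε0 : ∀ q, ε 0 q = 0) (hw0 : w 0 = w₀)
    (ha : ∀ s q, a (s + 1) q = ε s q + α s • g s q)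
    (hε : ∀ s q, ε (s + 1) q = a (s + 1) q - C (a (s + 1) q))
    (hw : ∀ s, w (s + 1) = w s - ∑ q, p q • C (a (s + 1) q))
    (hwtil : ∀ s, wtil s = w s - ∑ q, p q • ε s q)
    {γ : ℝ} (hγ0 : 0 < γ) (hγ1 : γ < 1)
    (hC : ∀ x, ‖C x - x‖ ^ 2 ≤ (1 - γ) * ‖x‖ ^ 2)
    {ρhat : ℝ} (hρhat : 0 < ρhat) (t : ℕ)
    (hgap : ‖C (∑ q, p q • a (t + 1) q) - ∑ q, p q • C (a (t + 1) q)‖ ≤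
        ρhat * ‖α t • ∑ q, p q • g t q‖) :
    ‖w (t + 1) - wtil (t + 1)‖ ≤
      Real.sqrt (1 - γ) * ‖w t - wtil t‖ +
        (Real.sqrt (1 - γ) + ρhat) * ‖wtil (t + 1) - wtil t‖ :=
  unidirectional_one_step_gap_bound_general p α C g a ε w wtil ha hε hw hwtil hC t hgap
end

section
/- (Satisfiability of the step-size condition (5) for polynomial step sizes.) Let γ ∈ (0,1) and λ > 0 satisfy (1 + λ)(1 − γ) < 1, let θ ∈ (1/2, 1], and set α_t = (t + 1)^{−θ} for t ≥ 0. Then there exists a constant D > 0 such that for every t ≥ 1, (1/(1 − γ)) Σ_{i=1}^t ((1 + λ)(1 − γ))^i · α_{t−i}²/α_t ≤ D. -/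
/-!
Each ratio `α_{t-i}² / α_t = (t+1)^θ / (t-i+1)^{2θ}` is at most `((t+1)/(t-i+1))^θ ≤ (i+1)^θ ≤ i+1`,
so with `β = (1+λ)(1-γ) < 1` the sum is dominated by `∑ (i+1) β^i = (1-β)^{-2}`, uniformly in `t`.
-/

open Finset

theorem hasSum_succ_mul_geometric_of_norm_lt_one {𝕜 : Type*} [NormedField 𝕜] [CompleteSpace 𝕜]
    {r : 𝕜} (hr : ‖r‖ < 1) : HasSum (fun n : ℕ ↦ (n + 1) * r ^ n) (1 / (1 - r) ^ 2) := by
  have hr1 : 1 - r ≠ 0 := sub_ne_zero.mpr (by rintro rfl; simp at hr)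
  convert (hasSum_coe_mul_geometric_of_norm_lt_one hr).add (hasSum_geometric_of_norm_lt_one hr)
    using 1
  · ext n; ring
  · field_simp; ring

theorem rpow_neg_sq_div_rpow_neg_le {x y θ : ℝ} (hx : 0 ≤ x) (hy : 0 ≤ y) (hθ0 : 0 ≤ θ)
    (hθ1 : θ ≤ 1) : ((x + 1) ^ (-θ)) ^ 2 / (x + y + 1) ^ (-θ) ≤ y + 1 := by
  have hx1 : 1 ≤ x + 1 := by linarith
  have hxy : 0 < x + y + 1 := by linarith
  calc ((x + 1) ^ (-θ)) ^ 2 / (x + y + 1) ^ (-θ)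
      = (x + y + 1) ^ θ / ((x + 1) ^ θ) ^ 2 := by
        rw [Real.rpow_neg hxy.le, Real.rpow_neg (by linarith), inv_pow, div_inv_eq_mul,
          inv_mul_eq_div]
    _ ≤ (x + y + 1) ^ θ / (x + 1) ^ θ := by
        gcongr
        exact le_self_pow₀ (Real.one_le_rpow hx1 hθ0) two_ne_zero
    _ = ((x + y + 1) / (x + 1)) ^ θ := (Real.div_rpow hxy.le (by linarith) θ).symm
    _ ≤ (y + 1) ^ θ := by
        gcongr
        rw [div_le_iff₀ (by linarith)]
        nlinarith
    _ ≤ y + 1 := Real.rpow_le_self_of_one_le (by linarith) hθ1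

theorem sum_geometric_mul_rpow_stepsize_ratio_le {β θ : ℝ} (hβ0 : 0 ≤ β) (hβ1 : β < 1)
    (hθ0 : 0 ≤ θ) (hθ1 : θ ≤ 1) (t : ℕ) :
    ∑ i ∈ Icc 1 t, β ^ i * ((((t - i : ℕ) : ℝ) + 1) ^ (-θ)) ^ 2 / ((t : ℝ) + 1) ^ (-θ)
      ≤ 1 / (1 - β) ^ 2 := by
  refine le_trans (sum_le_sum fun i hi ↦ ?_)
    (sum_le_hasSum _ (fun n _ ↦ by positivity)
      (hasSum_succ_mul_geometric_of_norm_lt_one (r := β) (by rwa [Real.norm_of_nonneg hβ0])))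
  have hit : i ≤ t := (mem_Icc.mp hi).2
  have hsplit : (t : ℝ) = ((t - i : ℕ) : ℝ) + i := by rw [Nat.cast_sub hit]; ring
  rw [mul_div_assoc, mul_comm, hsplit]
  gcongr
  exact rpow_neg_sq_div_rpow_neg_le (Nat.cast_nonneg _) (Nat.cast_nonneg _) hθ0 hθ1

theorem stepsize_condition_satisfiable_general
    {γ lam θ : ℝ} (hγ1 : γ < 1) (hlam : 0 < lam)
    (hcontr : (1 + lam) * (1 - γ) < 1) (hθ1 : 1 / 2 < θ) (hθ2 : θ ≤ 1)
    (α : ℕ → ℝ) (hα : ∀ t : ℕ, α t = ((t : ℝ) + 1) ^ (-θ)) :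
    ∃ D > 0, ∀ t : ℕ, 1 ≤ t →
      (1 / (1 - γ)) *
        ∑ i ∈ Icc 1 t, ((1 + lam) * (1 - γ)) ^ i * (α (t - i)) ^ 2 / α t ≤ D := by
  have hγ : 0 < 1 - γ := by linarith
  have hβ : 0 < 1 - (1 + lam) * (1 - γ) := by linarith
  refine ⟨1 / (1 - γ) * (1 / (1 - (1 + lam) * (1 - γ)) ^ 2), by positivity, fun t _ ↦ ?_⟩
  simp only [hα]
  gcongr
  exact sum_geometric_mul_rpow_stepsize_ratio_le (by positivity) hcontr (by linarith) hθ2 t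

/-- satisfiability of the step-size condition for polynomial step sizes:
for `γ ∈ (0,1)`, `λ > 0` with `(1+λ)(1−γ) < 1`, `θ ∈ (1/2, 1]`, and `α_t = (t+1)^{−θ}`,
there is `D > 0` with `(1/(1−γ)) Σ_{i=1}^t ((1+λ)(1−γ))^i α_{t−i}²/α_t ≤ D` for all `t ≥ 1`. -/
theorem stepsize_condition_satisfiable
    {γ lam θ : ℝ} (hγ0 : 0 < γ) (hγ1 : γ < 1) (hlam : 0 < lam)
    (hcontr : (1 + lam) * (1 - γ) < 1) (hθ1 : 1 / 2 < θ) (hθ2 : θ ≤ 1)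
    (α : ℕ → ℝ) (hα : ∀ t : ℕ, α t = ((t : ℝ) + 1) ^ (-θ)) :
    ∃ D > 0, ∀ t : ℕ, 1 ≤ t →
      (1 / (1 - γ)) *
        ∑ i ∈ Icc 1 t, ((1 + lam) * (1 - γ)) ^ i * (α (t - i)) ^ 2 / α t ≤ D :=
  stepsize_condition_satisfiable_general hγ1 hlam hcontr hθ1 hθ2 α hα
end
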